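/- For every positive integer a and nonnegative integer n, the number of a-parking functions of length n is a·(a+n)^{n-1}. -/

import Mathlib

/-!
Pollak's circle argument. Put `m = a + n` spots on the circle `ZMod m` and let car `i` prefer
spot `b i`. Read from the starting spot `c`, the preferences form an `a`-parking function iff the
walk `W j = #{cars preferring one of the spots 0, …, j - 1} - j` (spots counted periodically)
satisfies `W (c + m) < W (c + j)` for every `j < m`. The walk goes down by at most one per step
and drops by `a` over each period, so exactly `a` starting spots qualify: for each of the `a`
levels just below its minimum over one period, the spot `c` such that `c + m` is the first time
the walk reaches that level. Counting the pairs `(b, c)` in two ways gives `m · N = a · m ^ n`,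
where `N` is the number of `a`-parking functions (their entries all lie in `1, …, m`).
-/

def sortPF {n : ℕ} (p : Fin n → ℕ) : List ℕ :=
  Multiset.sort (↑(List.ofFn p)) (· ≤ ·)

/-- `p` is an `a`-parking function of length `n`: all entries are positive and the
`i`-th entry (0-based) of the sorted version is at most `a + i` (i.e. `a + i - 1` 1-based). -/
def IsAPF (a : ℕ) {n : ℕ} (p : Fin n → ℕ) : Prop :=
  (∀ i, 1 ≤ p i) ∧ ∀ i : Fin n, (sortPF p).getD i 0 ≤ a + (i : ℕ)

def IsPF {n : ℕ} (p : Fin n → ℕ) : Prop :=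
  (∀ i, 1 ≤ p i ∧ p i ≤ n) ∧ ∀ i : Fin n, (sortPF p).getD i 0 ≤ (i : ℕ) + 1

open Finset

theorem List.getElem_le_iff_lt_countP {α : Type*} [LinearOrder α] {l : List α}
    (hl : l.Pairwise (· ≤ ·)) {k : ℕ} (hk : k < l.length) (v : α) :
    l[k] ≤ v ↔ k < l.countP (· ≤ v) := by
  induction l generalizing k with
  | nil => simp at hk
  | cons x l ih =>
    rw [List.pairwise_cons] at hl
    by_cases hx : x ≤ v
    · rw [List.countP_cons_of_pos (by simpa using hx)]
      cases k with
      | zero => simpa using hx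
      | succ k => simpa using ih hl.2 (by simpa using hk)
    · have hgt : ∀ y ∈ x :: l, v < y := by
        simp only [List.mem_cons, forall_eq_or_imp]
        exact ⟨not_le.mp hx, fun y hy => (not_le.mp hx).trans_le (hl.1 y hy)⟩
      rw [List.countP_eq_zero.mpr (by simpa using hgt)]
      simpa using hgt _ (List.getElem_mem hk)

theorem List.countP_ofFn {α : Type*} {n : ℕ} (f : Fin n → α) (q : α → Prop) [DecidablePred q] :
    (List.ofFn f).countP q = #{i | q (f i)} := by
  rw [← Multiset.coe_countP, ← Fin.univ_val_map, Multiset.countP_map]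
  rfl

theorem sortPF_getD_le_iff {n : ℕ} (p : Fin n → ℕ) {k : ℕ} (hk : k < n) (v : ℕ) :
    (sortPF p).getD k 0 ≤ v ↔ k < #{i | p i ≤ v} := by
  have hperm : (sortPF p).Perm (List.ofFn p) := Multiset.coe_eq_coe.mp (Multiset.sort_eq _ _)
  have hk' : k < (sortPF p).length := by simpa [hperm.length_eq] using hk
  rw [List.getD_eq_getElem _ _ hk',
    List.getElem_le_iff_lt_countP (l := sortPF p) (Multiset.pairwise_sort _ _), hperm.countP_eq,
    ← List.countP_ofFn p (· ≤ v)]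

theorem isAPF_iff {a n : ℕ} (p : Fin n → ℕ) :
    IsAPF a p ↔ (∀ i, 1 ≤ p i) ∧ ∀ j < a + n, j < #{i | p i ≤ j} + a := by
  refine and_congr_right fun _ => ⟨fun h j hj => ?_, fun h i => ?_⟩
  · rcases lt_or_ge j a with hja | hja
    · omega
    · have := (sortPF_getD_le_iff p (k := j - a) (by omega) j).mp
        (by simpa [Nat.add_sub_cancel' hja] using h ⟨j - a, by omega⟩)
      omega
  · exact (sortPF_getD_le_iff p i.2 _).mpr (by have := h (a + i) (by omega); omega)

instance (a : ℕ) {n : ℕ} : DecidablePred (IsAPF a (n := n)) :=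
  fun _ => inferInstanceAs (Decidable (_ ∧ _))

theorem IsAPF.apply_lt_add {a n : ℕ} {p : Fin n → ℕ} (hp : IsAPF a p) (i : Fin n) :
    p i < a + n := by
  have hn := i.pos
  have hcount := ((isAPF_iff p).mp hp).2 (a + n - 1) (by omega)
  have hall : #{i | p i ≤ a + n - 1} = #(univ : Finset (Fin n)) :=
    le_antisymm (card_filter_le _ _) (by rw [card_univ, Fintype.card_fin]; omega)
  have := card_filter_eq_iff.mp hall i (mem_univ i)
  omega

theorem exists_first_hit_eq {W : ℕ → ℤ} (hstep : ∀ j, W j - 1 ≤ W (j + 1)) {v : ℤ} {k : ℕ}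
    (hk : W k ≤ v) (h0 : v < W 0) : ∃ q ≤ k, W q = v ∧ ∀ j < q, v < W j := by
  have hex : ∃ q, W q ≤ v := ⟨k, hk⟩
  refine ⟨Nat.find hex, Nat.find_min' hex hk, ?_, fun j hj => not_le.mp (Nat.find_min hex hj)⟩
  have hpos : Nat.find hex ≠ 0 := fun h => by
    have := Nat.find_spec hex
    rw [h] at this
    omega
  obtain ⟨q, hq⟩ := Nat.exists_eq_succ_of_ne_zero hpos
  have hle := Nat.find_spec hex
  have hlt : v < W q := not_le.mp (Nat.find_min hex (by omega))
  rw [hq] at hle ⊢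
  linarith [hstep q]

theorem lt_of_forall_lt_window {W : ℕ → ℤ} {a m : ℕ} (hper : ∀ j, W (j + m) = W j - a)
    {c : ℕ} (hc : c < m) (hwin : ∀ j < m, W (c + m) < W (c + j)) {k : ℕ} (hk : k < c + m) :
    W (c + m) < W k := by
  rcases le_or_gt c k with h | h
  · simpa [Nat.add_sub_cancel' h] using hwin (k - c) (by omega)
  · have := hwin (k + m - c) (by omega)
    rw [show c + (k + m - c) = k + m by omega, hper k] at this
    omega

theorem card_filter_forall_lt_window {W : ℕ → ℤ} {a m : ℕ} (hm : 0 < m)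
    (hstep : ∀ j, W j - 1 ≤ W (j + 1)) (hper : ∀ j, W (j + m) = W j - a) :
    #{c ∈ range m | ∀ j < m, W (c + m) < W (c + j)} = a := by
  have hne : (range m).Nonempty := nonempty_range_iff.mpr hm.ne'
  set μ := (range m).inf' hne W
  have hμ : ∀ k < m, μ ≤ W k := fun k hk => inf'_le W (mem_range.mpr hk)
  have hcard : #(Ico (μ - a) μ) = a := by simp
  rw [← hcard]
  refine card_bij (fun c _ => W (c + m)) (fun c hc => ?_) (fun c₁ hc₁ c₂ hc₂ heq => ?_)
    (fun v hv => ?_)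
  · rw [mem_filter, mem_range] at hc
    rw [mem_Ico, lt_inf'_iff]
    exact ⟨by linarith [hper c, hμ c hc.1],
      fun k hk => lt_of_forall_lt_window hper hc.1 hc.2 (by rw [mem_range] at hk; omega)⟩
  · rw [mem_filter, mem_range] at hc₁ hc₂
    by_contra hc₁₂
    rcases lt_or_gt_of_ne hc₁₂ with h | h
    · exact (lt_of_forall_lt_window hper hc₂.1 hc₂.2 (k := c₁ + m) (by omega)).ne heq.symm
    · exact (lt_of_forall_lt_window hper hc₁.1 hc₁.2 (k := c₂ + m) (by omega)).ne heq
  · rw [mem_Ico] at hv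
    obtain ⟨k₀, hk₀, hmin⟩ := exists_mem_eq_inf' hne W
    rw [mem_range] at hk₀
    obtain ⟨q, hqk, hqv, hbefore⟩ := exists_first_hit_eq hstep (k := k₀ + m)
      (by rw [hper, ← hmin]; exact hv.1) (hv.2.trans_le (hμ 0 hm))
    have hmq : m ≤ q := by
      by_contra! h
      exact (hv.2.trans_le (hμ q h)).ne' hqv
    refine ⟨q - m, mem_filter.mpr ⟨mem_range.mpr (by omega), fun j hj => ?_⟩, ?_⟩ <;>
      rw [Nat.sub_add_cancel hmq]
    · rw [hqv]
      exact hbefore _ (by omega)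
    · exact hqv

section CircularStreet

variable {m n : ℕ}

theorem ZMod.val_eq_iff_eq_natCast [NeZero m] {x : ZMod m} {k : ℕ} (hk : k < m) :
    x.val = k ↔ x = k := by
  constructor
  · rintro rfl
    exact (ZMod.natCast_zmod_val x).symm
  · rintro rfl
    exact ZMod.val_natCast_of_lt hk

theorem card_filter_val_sub_lt [NeZero m] (b : Fin n → ZMod m) (c : ZMod m) {j : ℕ}
    (hj : j ≤ m) :
    #{i | (b i - c).val < j} = ∑ x ∈ range j, #{i | b i = c + x} := by
  rw [card_eq_sum_card_fiberwise (f := fun i => (b i - c).val) (t := range j)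
    fun i hi => by simpa using hi]
  refine sum_congr rfl fun x hx => congrArg card ?_
  have hx : x < j := mem_range.mp hx
  ext i
  simp only [mem_filter, mem_univ, true_and]
  rw [ZMod.val_eq_iff_eq_natCast (by omega), sub_eq_iff_eq_add']
  refine ⟨And.right, fun h => ⟨?_, h⟩⟩
  rwa [h, add_sub_cancel_left, ZMod.val_natCast_of_lt (by omega)]

def surplus (b : Fin n → ZMod m) (j : ℕ) : ℤ :=
  ∑ t ∈ range j, ((#{i | b i = t} : ℤ) - 1)

theorem surplus_le_succ (b : Fin n → ZMod m) (j : ℕ) :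
    surplus b j - 1 ≤ surplus b (j + 1) := by
  rw [surplus, surplus, sum_range_succ]
  linarith [(#{i | b i = j}).cast_nonneg (α := ℤ)]

theorem surplus_add [NeZero m] (b : Fin n → ZMod m) (k : ℕ) {j : ℕ} (hj : j ≤ m) :
    surplus b (k + j) = surplus b k + #{i | (b i - k).val < j} - j := by
  rw [surplus, surplus, sum_range_add, card_filter_val_sub_lt b k hj]
  push_cast
  simp only [sum_sub_distrib, sum_const, card_range, nsmul_one]
  ring

theorem surplus_add_period [NeZero m] (b : Fin n → ZMod m) (k : ℕ) :
    surplus b (k + m) = surplus b k + n - m := by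
  rw [surplus_add b k le_rfl]
  simp [ZMod.val_lt]

/-- Spot `c` of the circular street `ZMod m` becomes spot `1`, spot `c + 1` becomes `2`, and so
on. -/
def relabel (b : Fin n → ZMod m) (c : ℕ) : Fin n → ℕ := fun i => (b i - c).val + 1

theorem card_filter_isAPF_relabel_eq {a : ℕ} [NeZero m] (c : ℕ) :
    #{b : Fin n → ZMod m | IsAPF a (relabel b c)} =
      #{b : Fin n → ZMod m | IsAPF a (relabel b 0)} :=
  card_equiv (Equiv.subRight fun _ => (c : ZMod m)) fun b => by
    simp only [mem_filter, mem_univ, true_and, Equiv.subRight_apply]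
    rw [show relabel (b - fun _ => (c : ZMod m)) 0 = relabel b c by funext i; simp [relabel]]

end CircularStreet

theorem isAPF_relabel_iff {a n : ℕ} [NeZero (a + n)] (b : Fin n → ZMod (a + n)) (c : ℕ) :
    IsAPF a (relabel b c) ↔ ∀ j < a + n, surplus b (c + (a + n)) < surplus b (c + j) := by
  simp only [isAPF_iff, relabel, le_add_iff_nonneg_left, zero_le, implies_true, true_and,
    Nat.add_one_le_iff]
  refine forall₂_congr fun j hj => ?_
  have h1 := surplus_add b c hj.le
  have h2 := surplus_add_period b c
  omega

theorem card_filter_isAPF_relabel {a n : ℕ} [NeZero (a + n)] (b : Fin n → ZMod (a + n)) :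
    #{c ∈ range (a + n) | IsAPF a (relabel b c)} = a := by
  simp_rw [isAPF_relabel_iff]
  exact card_filter_forall_lt_window (NeZero.pos _) (surplus_le_succ b)
    fun j => by rw [surplus_add_period]; push_cast; ring

theorem add_mul_card_isAPF_relabel (a n : ℕ) [NeZero (a + n)] :
    (a + n) * #{b : Fin n → ZMod (a + n) | IsAPF a (relabel b 0)} = a * (a + n) ^ n := by
  have := card_mul_eq_card_mul (fun b c => IsAPF a (relabel b c))
    (s := univ) (t := range (a + n)) (fun b _ => card_filter_isAPF_relabel b)
    (fun c _ => card_filter_isAPF_relabel_eq _)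
  simp only [card_univ, Fintype.card_fun, ZMod.card, Fintype.card_fin, card_range] at this
  linarith

theorem natCard_isAPF {a n : ℕ} [NeZero (a + n)] :
    Nat.card {p : Fin n → ℕ // IsAPF a p} =
      #{b : Fin n → ZMod (a + n) | IsAPF a (relabel b 0)} := by
  have hinj : Function.Injective fun b : Fin n → ZMod (a + n) => relabel b 0 := by
    intro b b' h
    funext i
    exact ZMod.val_injective _ (by simpa [relabel] using congrFun h i)
  have himage : {p : Fin n → ℕ | IsAPF a p} =
      (fun b => relabel b 0) '' {b : Fin n → ZMod (a + n) | IsAPF a (relabel b 0)} := by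
    ext p
    refine ⟨fun hp => ⟨fun i => ((p i - 1 : ℕ) : ZMod (a + n)), ?_⟩, ?_⟩
    · have hrel : relabel (fun i => ((p i - 1 : ℕ) : ZMod (a + n))) 0 = p := by
        funext i
        have := hp.1 i
        have := hp.apply_lt_add i
        simp only [relabel, Nat.cast_zero, sub_zero,
          ZMod.val_natCast_of_lt (show p i - 1 < a + n by omega)]
        omega
      exact ⟨by rw [Set.mem_ofPred_eq, hrel]; exact hp, hrel⟩
    · rintro ⟨b, hb, rfl⟩
      exact hb
  rw [← Set.coe_ofPred, himage, Nat.card_image_of_injective hinj, Nat.card_eq_card_toFinset,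
    Set.toFinset_ofPred]

/-- The exponent is an integer, so that for `n = 0` the right-hand side is `a · a⁻¹ = 1`. -/
theorem num_a_parking_functions (a n : ℕ) (ha : 1 ≤ a) :
    (Nat.card {p : Fin n → ℕ // IsAPF a p} : ℚ) =
      (a : ℚ) * ((a : ℚ) + (n : ℚ)) ^ ((n : ℤ) - 1) := by
  have : NeZero (a + n) := ⟨by omega⟩
  have hm : (a : ℚ) + n ≠ 0 := by positivity
  rw [natCard_isAPF, zpow_sub_one₀ hm, zpow_natCast, ← mul_assoc, eq_mul_inv_iff_mul_eq₀ hm,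
    mul_comm]
  exact_mod_cast add_mul_card_isAPF_relabel a n
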